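/- The map i ↦ P^i from M(α₁,α₂) to S(α₁,α₂) is a monoid homomorphism: P^{ij} = P^i · P^j (componentwise product of polynomial pairs) and P^∅ = (1,1), where ij denotes concatenation of sequences. -/
import Mathlib


open Polynomial

def wsum (α₁ α₂ : ℂ) (l : List Bool) : ℂ :=
  (l.map (fun b => if b then α₂ else α₁)).sum

noncomputable def Pfun (α₁ α₂ : ℂ) (mb : Bool) (l : List Bool) : Polynomial ℂ :=
  ∏ k ∈ Finset.range l.length,
    if l.getD k false = mb then 1
    else (Polynomial.X - Polynomial.C (wsum α₁ α₂ (l.take (k + 1))))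

lemma wsum_append (α₁ α₂ : ℂ) (l l' : List Bool) :
    wsum α₁ α₂ (l ++ l') = wsum α₁ α₂ l + wsum α₁ α₂ l' := by
  simp [wsum]

theorem stmt13 (α₁ α₂ : ℂ) (hα₁ : α₁ ≠ 0) (hα₂ : α₂ ≠ 0) :
    (∀ mb : Bool, Pfun α₁ α₂ mb [] = 1) ∧
    ∀ l l' : List Bool, wsum α₁ α₂ l = 0 → wsum α₁ α₂ l' = 0 →
      ∀ mb : Bool, Pfun α₁ α₂ mb (l ++ l') = Pfun α₁ α₂ mb l * Pfun α₁ α₂ mb l' := by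
  constructor
  · intro mb; simp [Pfun]
  · intro l l' hl hl' mb
    unfold Pfun
    rw [List.length_append, Finset.prod_range_add]
    congr 1
    · apply Finset.prod_congr rfl
      intro k hk
      rw [Finset.mem_range] at hk
      rw [List.getD_append _ _ _ _ hk, List.take_append_of_le_length (by omega)]
    · apply Finset.prod_congr rfl
      intro k hk
      have h1 : (l ++ l').getD (l.length + k) false = l'.getD k false := by
        rw [List.getD_append_right _ _ _ _ (Nat.le_add_right _ _)]; congr 1; omega
      have h2 : (l ++ l').take (l.length + k + 1) = l ++ l'.take (k + 1) := by
        rw [List.take_append]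
        congr 1
        · exact List.take_of_length_le (by omega)
        · congr 1; omega
      rw [h1, h2, wsum_append, hl, zero_add]
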